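/- For x ∈ ℝ⁵ with |x| > 0, the subtracted convolution R̂_0(x) = ∫_{ℝ⁵} (R_0(z))² (R_0(z+x) − R_0(x)) dz, where the integral is over |z| ≥ |x| appropriately interpreted via spherical averaging, equals −1/((16π²)²|x|⁴). Equivalently: (1/(8π²)³) ∫_{|z| ≥ |x|} (|z|^{−9} − |x|^{−3}|z|^{−6}) dz = −1/((16π²)²|x|⁴). -/

import Mathlib

/-!
On `{|z| ≥ |x|}` the integrand `(8π²)⁻³ (|z|⁻⁹ − |x|⁻³|z|⁻⁶)` is radial, so polar coordinates
turn the integral into `|S⁴| (8π²)⁻³ ∫_{|x|}^∞ r⁴ (r⁻⁹ − |x|⁻³ r⁻⁶) dr = |S⁴| (8π²)⁻³ (−3/4) |x|⁻⁴`,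
and `|S⁴| = 5 vol(B⁵) = 8π²/3`.
-/

open MeasureTheory Real

noncomputable def R0 (x : EuclideanSpace ℝ (Fin 5)) : ℝ := 1 / (8 * π ^ 2 * ‖x‖ ^ 3)

open Set Metric

section Radial

variable {E F : Type*} [NormedAddCommGroup E] [NormedSpace ℝ E] [MeasurableSpace E] [BorelSpace E]
  [FiniteDimensional ℝ E] [Nontrivial E] [NormedAddCommGroup F] [NormedSpace ℝ F]

theorem setIntegral_setOf_le_norm_fun_norm_addHaar (μ : Measure E) [μ.IsAddHaarMeasure]
    (f : ℝ → F) {a : ℝ} (ha : 0 < a) :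
    ∫ x in {x : E | a ≤ ‖x‖}, f ‖x‖ ∂μ =
      Module.finrank ℝ E • μ.real (ball 0 1) •
        ∫ y in Ioi a, y ^ (Module.finrank ℝ E - 1) • f y := by
  have hIci : Ici a ∩ Ioi 0 = Ici a := inter_eq_left.mpr fun y hy => ha.trans_le hy
  rw [← integral_indicator (measurableSet_le measurable_const measurable_norm),
    show ({x : E | a ≤ ‖x‖}.indicator fun x => f ‖x‖) = fun x => (Ici a).indicator f ‖x‖ from rfl,
    integral_fun_norm_addHaar μ, ← indicator_smul, integral_indicator measurableSet_Ici,
    Measure.restrict_restrict measurableSet_Ici, hIci, integral_Ici_eq_integral_Ioi]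

end Radial

theorem EuclideanSpace.volume_ball_fin_five (x : EuclideanSpace ℝ (Fin 5)) (r : ℝ) :
    volume (ball x r) = .ofReal r ^ 5 * .ofReal (8 * π ^ 2 / 15) := by
  norm_num [InnerProductSpace.volume_ball_of_dim_odd (k := 2) (by simp) x, Nat.doubleFactorial]
  ring_nf

theorem integral_Ioi_pow_four_mul_sub {a : ℝ} (ha : 0 < a) :
    ∫ y in Ioi a, y ^ 4 * (1 / y ^ 9 - 1 / (a ^ 3 * y ^ 6)) = -3 / (4 * a ^ 4) := by
  have hrpow : EqOn (fun y : ℝ => y ^ 4 * (1 / y ^ 9 - 1 / (a ^ 3 * y ^ 6)))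
      (fun y => y ^ (-5 : ℝ) - 1 / a ^ 3 * y ^ (-2 : ℝ)) (Ioi a) := fun y hy => by
    have hy : 0 < y := ha.trans hy
    simp only [rpow_neg hy.le, rpow_ofNat]
    field_simp
  rw [setIntegral_congr_fun measurableSet_Ioi hrpow,
    integral_sub (integrableOn_Ioi_rpow_of_lt (by norm_num) ha)
      ((integrableOn_Ioi_rpow_of_lt (by norm_num) ha).const_mul _),
    integral_const_mul, integral_Ioi_rpow_of_lt (by norm_num) ha,
    integral_Ioi_rpow_of_lt (by norm_num) ha]
  norm_num [rpow_neg ha.le]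
  field_simp
  ring

/-- The subtracted convolution `R̂₀(x) = ∫ (R₀(z))² (R₀(z+x) − R₀(x)) dz`, interpreted via
spherical averaging (the spherical average of `R₀(z+x)` over `{|z|=r}` is `R₀(x)` for
`|x| > r` and `1/(8π²r³) = R₀(z)` for `|x| ≤ r`), equals
`∫_{|z| ≥ |x|} (R₀(z))² (R₀(z) − R₀(x)) dz = −1/((16π²)²|x|⁴)`. -/
theorem stmt10 (x : EuclideanSpace ℝ (Fin 5)) (hx : x ≠ 0) :
    ∫ z in {z : EuclideanSpace ℝ (Fin 5) | ‖x‖ ≤ ‖z‖}, (R0 z) ^ 2 * (R0 z - R0 x)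
      = -(1 / ((16 * π ^ 2) ^ 2 * ‖x‖ ^ 4)) := by
  have ha : 0 < ‖x‖ := norm_pos_iff.mpr hx
  have hradial : ∀ z, R0 z ^ 2 * (R0 z - R0 x) =
      1 / (8 * π ^ 2) ^ 3 * (1 / ‖z‖ ^ 9 - 1 / (‖x‖ ^ 3 * ‖z‖ ^ 6)) := fun z => by
    simp only [R0]
    ring
  simp_rw [hradial]
  rw [integral_const_mul, setIntegral_setOf_le_norm_fun_norm_addHaar volume
      (fun r => 1 / r ^ 9 - 1 / (‖x‖ ^ 3 * r ^ 6)) ha,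
    finrank_euclideanSpace_fin, measureReal_def, EuclideanSpace.volume_ball_fin_five,
    ENNReal.ofReal_one, one_pow, one_mul, ENNReal.toReal_ofReal (by positivity)]
  simp only [smul_eq_mul, nsmul_eq_mul]
  rw [integral_Ioi_pow_four_mul_sub ha]
  field_simp
  ring
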